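/- Let k be a field and A an associative unital k-algebra whose center Z is a finitely generated k-algebra, and such that A is finitely generated as a Z-module. Then every simple (right) A-module is finite-dimensional over k. -/

import Mathlib

/-! A simple `Aᵐᵒᵖ`-module `M` is cyclic, hence a finite module over the center `Z`, on which `Z`
acts by `A`-linear maps. A maximal ideal `𝔪 ⊇ Ann_Z M` lies in the support of `M`, so `𝔪 M ≠ M`;
but `𝔪 M` is an `A`-submodule, hence zero. So `M` is a finite-dimensional vector space over the
field `Z ⧸ 𝔪`, which is finite over `k` by Zariski's lemma. -/

open Module

section

variable {R S M : Type*} [CommRing R] [AddCommGroup M] [Module R M]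

theorem Submodule.smul_mem_ideal_smul_top [DistribSMul S M] [SMulCommClass R S M] (I : Ideal R)
    (s : S) {x : M} (hx : x ∈ I • (⊤ : Submodule R M)) : s • x ∈ I • (⊤ : Submodule R M) := by
  refine Submodule.smul_induction_on hx (fun r hr y _ ↦ ?_) (fun x y hx hy ↦ ?_)
  · rw [← smul_comm]
    exact Submodule.smul_mem_smul hr trivial
  · rw [smul_add]
    exact add_mem hx hy

theorem Submodule.ideal_smul_top_ne_top_of_annihilator_le [Module.Finite R M] (p : Ideal R)
    [p.IsPrime] (h : Module.annihilator R M ≤ p) : p • (⊤ : Submodule R M) ≠ ⊤ := by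
  let P : PrimeSpectrum R := ⟨p, ‹_›⟩
  have hP : P ∈ support R (M ⧸ p • (⊤ : Submodule R M)) := by
    rw [support_quotient]
    exact ⟨mem_support_iff_of_finite.mpr h, fun _ hx ↦ hx⟩
  exact Submodule.Quotient.nontrivial_iff.mp (nonempty_support_iff.mp ⟨P, hP⟩)

theorem Submodule.eq_bot_or_eq_top_of_smul_mem [Ring S] [Module S M] [IsSimpleModule S M]
    (N : Submodule R M) (h : ∀ (s : S) {x : M}, x ∈ N → s • x ∈ N) : N = ⊥ ∨ N = ⊤ := by
  let N' : Submodule S M := { N.toAddSubmonoid with smul_mem' := fun s _ hx ↦ h s hx }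
  rcases eq_bot_or_eq_top N' with hN | hN
  · exact .inl <| (Submodule.eq_bot_iff N).mpr fun x hx ↦ (Submodule.mem_bot S).mp (hN ▸ hx)
  · exact .inr <| Submodule.eq_top_iff'.mpr fun x ↦ (hN ▸ Submodule.mem_top : x ∈ N')

end

theorem Module.annihilator_isMaximal_of_isSimpleModule {R : Type*} (S : Type*) {M : Type*}
    [CommRing R] [Ring S] [AddCommGroup M] [Module R M] [Module S M] [SMulCommClass R S M]
    [IsSimpleModule S M] [Module.Finite R M] : (annihilator R M).IsMaximal := by
  have : Nontrivial M := IsSimpleModule.nontrivial S M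
  obtain ⟨m, hm, hle⟩ := Ideal.exists_le_maximal _
    ((annihilator_eq_top_iff (R := R)).not.mpr (not_subsingleton M))
  have hbot : m • (⊤ : Submodule R M) = ⊥ :=
    (Submodule.eq_bot_or_eq_top_of_smul_mem (S := S) _
      (Submodule.smul_mem_ideal_smul_top m)).resolve_right
      (Submodule.ideal_smul_top_ne_top_of_annihilator_le m hle)
  have hge : m ≤ annihilator R M := by
    rw [← Submodule.annihilator_top]
    exact Submodule.le_annihilator_iff.mpr hbot
  exact le_antisymm hle hge ▸ hm

theorem Module.Finite.of_annihilator_isMaximal (k : Type*) {R M : Type*} [Field k] [CommRing R]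
    [Algebra k R] [Algebra.FiniteType k R] [AddCommGroup M] [Module R M] [Module k M]
    [IsScalarTower k R M] [Module.Finite R M] (h : (annihilator R M).IsMaximal) :
    Module.Finite k M := by
  let K := R ⧸ annihilator R M
  let : Field K := Ideal.Quotient.field _
  have : Module.Finite k K := finite_of_finite_type_of_isJacobsonRing k K
  let : Module K M := Module.quotientAnnihilator
  have : Module.Finite K M := .of_restrictScalars_finite R K M
  exact .trans K M

theorem Module.Finite.of_isSimpleModule (k R S M : Type*) [Field k] [CommRing R] [Ring S]
    [Algebra k R] [Algebra R S] [Algebra k S] [IsScalarTower k R S] [Algebra.FiniteType k R]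
    [Module.Finite R S] [AddCommGroup M] [Module S M] [Module k M] [IsScalarTower k S M]
    [IsSimpleModule S M] : Module.Finite k M := by
  let : Module R M := Module.compHom M (algebraMap R S)
  have : IsScalarTower R S M := .of_algebraMap_smul fun _ _ ↦ rfl
  have : IsScalarTower k R M := .of_algebraMap_smul fun c m ↦ by
    change algebraMap R S (algebraMap k R c) • m = c • m
    rw [← IsScalarTower.algebraMap_apply, algebraMap_smul]
  have : Module.Finite R M := .trans (R := R) S M
  have hmax : (annihilator R M).IsMaximal := annihilator_isMaximal_of_isSimpleModule S
  exact .of_annihilator_isMaximal k hmax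

/-- Let `A` be an associative unital `k`-algebra whose center is a finitely generated
commutative `k`-algebra, and suppose `A` is finitely generated as a module over its center.
Then every simple right `A`-module (i.e. simple left `Aᵐᵒᵖ`-module) is finite-dimensional
over `k`. -/
theorem simple_module_finiteDimensional_of_center_finiteType
    (k : Type*) [Field k]
    (A : Type*) [Ring A] [Algebra k A]
    [Algebra.FiniteType k (Subalgebra.center k A)]
    [Module.Finite (Subalgebra.center k A) A]
    (M : Type*) [AddCommGroup M] [Module Aᵐᵒᵖ M] [IsSimpleModule Aᵐᵒᵖ M]
    [Module k M] [IsScalarTower k Aᵐᵒᵖ M] :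
    FiniteDimensional k M := by
  -- Mathlib provides the center's `Module` instance on `A`, but no `Algebra` instance.
  let : Algebra (Subalgebra.center k A) A := Algebra.ofModule smul_mul_assoc fun z a b ↦ by
    change a * (z * b) = z * (a * b)
    rw [← mul_assoc, Subalgebra.mem_center_iff.mp z.2 a, mul_assoc]
  exact .of_isSimpleModule k (Subalgebra.center k A) Aᵐᵒᵖ M
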